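/- arXiv:1706.08519 — 2 statements merged into one kernel-verified Lean document; each statement's English description precedes it below -/
import Mathlib

section
/- Let f₀₁, f₁₁ be strictly positive probability vectors in ℝᵏ and f₀₀, f₁₀ be probability vectors in ℝ^{k₁} with f₀₀ strictly positive. If max_j f₁₀(j)/f₀₀(j) > max_i f₁₁(i)/f₀₁(i), then there is no k × k₁ Markov kernel K such that f₀₁K = f₀₀ and f₁₁K = f₁₀. In other words, the score distribution of one group cannot be mapped onto that of the other group by a single Markov kernel when the maximal likelihood ratio increases in that direction. -/
open Finset

/-- If the maximal likelihood ratio increases, no single Markov kernel can map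
`f₀₁ ↦ f₀₀` and `f₁₁ ↦ f₁₀` simultaneously. -/
theorem no_markov_kernel_of_likelihood_ratio_increase {k k₁ : ℕ} [NeZero k] [NeZero k₁]
    (f₀₁ f₁₁ : Fin k → ℝ) (f₀₀ f₁₀ : Fin k₁ → ℝ)
    (h₀₁ : (∀ i, 0 < f₀₁ i) ∧ ∑ i, f₀₁ i = 1)
    (h₁₁ : (∀ i, 0 < f₁₁ i) ∧ ∑ i, f₁₁ i = 1)
    (h₀₀ : (∀ j, 0 < f₀₀ j) ∧ ∑ j, f₀₀ j = 1)
    (h₁₀ : (∀ j, 0 ≤ f₁₀ j) ∧ ∑ j, f₁₀ j = 1)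
    (hLR : (univ : Finset (Fin k)).sup' univ_nonempty (fun i => f₁₁ i / f₀₁ i) <
           (univ : Finset (Fin k₁)).sup' univ_nonempty (fun j => f₁₀ j / f₀₀ j)) :
    ¬ ∃ K : Matrix (Fin k) (Fin k₁) ℝ,
        (∀ i j, 0 ≤ K i j) ∧ (∀ i, ∑ j, K i j = 1) ∧
        (∀ j, ∑ i, f₀₁ i * K i j = f₀₀ j) ∧ (∀ j, ∑ i, f₁₁ i * K i j = f₁₀ j) := by
  obtain ⟨hpos₀₁, -⟩ := h₀₁
  obtain ⟨hpos₀₀, -⟩ := h₀₀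
  rintro ⟨K, hK0, hK1, h00, h10⟩
  set M := (univ : Finset (Fin k)).sup' univ_nonempty (fun i => f₁₁ i / f₀₁ i) with hM
  have hle : ∀ i, f₁₁ i ≤ M * f₀₁ i := by
    intro i
    have h := Finset.le_sup' (fun i => f₁₁ i / f₀₁ i) (mem_univ i)
    calc f₁₁ i = (f₁₁ i / f₀₁ i) * f₀₁ i := by
          rw [div_mul_cancel₀ _ (hpos₀₁ i).ne']
      _ ≤ M * f₀₁ i := mul_le_mul_of_nonneg_right h (hpos₀₁ i).le
  have hj : ∀ j, f₁₀ j / f₀₀ j ≤ M := by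
    intro j
    have hb : f₁₀ j ≤ M * f₀₀ j := by
      rw [← h10 j, ← h00 j, Finset.mul_sum]
      apply Finset.sum_le_sum
      intro i _
      rw [← mul_assoc]
      exact mul_le_mul_of_nonneg_right (hle i) (hK0 i j)
    exact (div_le_iff₀ (hpos₀₀ j)).mpr hb
  have := Finset.sup'_le univ_nonempty (fun j => f₁₀ j / f₀₀ j) (fun j _ => hj j)
  linarith
end

section
/- In general, to achieve equalized odds one must randomize the scores of both groups: there exist a positive integer n and probability vectors f₀₀, f₁₀, f₀₁, f₁₁ in ℝⁿ such that (i) no n × n Markov kernel K satisfies both f₀₀K = f₀₁ and f₁₀K = f₁₁, and (ii) no n × n Markov kernel K′ satisfies both f₀₁K′ = f₀₀ and f₁₁K′ = f₁₀. -/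
/-- In general, one must randomize the scores of both groups to achieve equalized odds:
there exist probability vectors `f₀₀, f₁₀, f₀₁, f₁₁` such that no single Markov kernel
maps the pair `(f₀₀, f₁₀)` onto `(f₀₁, f₁₁)`, and no single Markov kernel maps the pair
`(f₀₁, f₁₁)` onto `(f₀₀, f₁₀)`. -/
theorem must_randomize_both_groups :
    ∃ (n : ℕ), 0 < n ∧ ∃ f₀₀ f₁₀ f₀₁ f₁₁ : Fin n → ℝ,
      ((∀ i, 0 ≤ f₀₀ i) ∧ ∑ i, f₀₀ i = 1) ∧
      ((∀ i, 0 ≤ f₁₀ i) ∧ ∑ i, f₁₀ i = 1) ∧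
      ((∀ i, 0 ≤ f₀₁ i) ∧ ∑ i, f₀₁ i = 1) ∧
      ((∀ i, 0 ≤ f₁₁ i) ∧ ∑ i, f₁₁ i = 1) ∧
      (¬ ∃ K : Matrix (Fin n) (Fin n) ℝ,
          (∀ i j, 0 ≤ K i j) ∧ (∀ i, ∑ j, K i j = 1) ∧
          (∀ j, ∑ i, f₀₀ i * K i j = f₀₁ j) ∧ (∀ j, ∑ i, f₁₀ i * K i j = f₁₁ j)) ∧
      (¬ ∃ K' : Matrix (Fin n) (Fin n) ℝ,
          (∀ i j, 0 ≤ K' i j) ∧ (∀ i, ∑ j, K' i j = 1) ∧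
          (∀ j, ∑ i, f₀₁ i * K' i j = f₀₀ j) ∧ (∀ j, ∑ i, f₁₁ i * K' i j = f₁₀ j)) := by
  refine ⟨2, by norm_num, ![1, 0], ![1/2, 1/2], ![1/2, 1/2], ![0, 1], ?_, ?_, ?_, ?_, ?_, ?_⟩
  · exact ⟨fun i => by fin_cases i <;> norm_num, by simp [Fin.sum_univ_two]⟩
  · exact ⟨fun i => by fin_cases i <;> norm_num, by norm_num [Fin.sum_univ_two]⟩
  · exact ⟨fun i => by fin_cases i <;> norm_num, by norm_num [Fin.sum_univ_two]⟩
  · exact ⟨fun i => by fin_cases i <;> norm_num, by simp [Fin.sum_univ_two]⟩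
  · rintro ⟨K, hpos, hrow, h1, h2⟩
    have e1 := h1 0
    have e2 := h2 0
    simp [Fin.sum_univ_two] at e1 e2
    have := hpos 1 0
    linarith
  · rintro ⟨K, hpos, hrow, h1, h2⟩
    have e1 := h1 1
    simp [Fin.sum_univ_two] at e1
    have p01 := hpos 0 1
    have p11 := hpos 1 1
    have h11 : K 1 1 = 0 := by linarith
    have hr := hrow 1
    simp [Fin.sum_univ_two] at hr
    have e2 := h2 0
    simp [Fin.sum_univ_two] at e2
    linarith
end
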